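/- Let s ≥ 3 and s+2 ≤ t ≤ 2s-1 be integers. Then (t-1)η > 2δ and δ > 2/3. -/

import Mathlib

/-- The pair `(s,t)` is regular if `s ≥ 11` and `s+3 ≤ t ≤ 2s-4`, or if
`(s,t) ∈ {(10,14),(10,15)}`. -/
def IsRegularPair (s t : ℕ) : Prop :=
  (11 ≤ s ∧ s + 3 ≤ t ∧ t ≤ 2 * s - 4) ∨ (s = 10 ∧ t = 14) ∨ (s = 10 ∧ t = 15)

open Classical in
/-- The exponent `α = α_{s,t}`. -/
noncomputable def ERalpha (s t : ℕ) : ℝ :=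
  if IsRegularPair s t then
    (((s : ℝ) - 2) * ((t : ℝ) - (s : ℝ)) * ((t : ℝ) + (s : ℝ) - 1) + 2 * (t : ℝ) - 2 * (s : ℝ)) /
      ((2 * (s : ℝ) - 3) * ((t : ℝ) - (s : ℝ)) * ((t : ℝ) + (s : ℝ) - 1) - 2 * (s : ℝ) + 4)
  else
    (((s : ℝ) - 2) * ((t : ℝ) - (s : ℝ)) * ((s : ℝ) - 1) + (s : ℝ) - 1) /
      ((2 * (s : ℝ) - 3) * ((t : ℝ) - (s : ℝ)) * ((s : ℝ) - 1) + 2 * (s : ℝ) - (t : ℝ))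

/-- `δ = s - (2s-1)α`. -/
noncomputable def ERdelta (s t : ℕ) : ℝ := (s : ℝ) - (2 * (s : ℝ) - 1) * ERalpha s t

/-- `η = 2(1-α) - δ`. -/
noncomputable def EReta (s t : ℕ) : ℝ := 2 * (1 - ERalpha s t) - ERdelta s t

/-! Both inequalities are linear in `α`; writing `α = N / D` with `D > 0` turns each into the
positivity of a polynomial in `s` and `t`. In the coordinates `s = a + b + 7`, `t = 2a + b + 10`
(regular pairs) and `s = a + b + 3`, `t = 2a + b + 5` (exceptional pairs), in which each case's
range lies in the quadrant `a, b ≥ 0`, these two polynomials and `D` have positive coefficients. -/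

def regularNum (x y : ℝ) : ℝ := (x - 2) * (y - x) * (y + x - 1) + 2 * y - 2 * x

def regularDen (x y : ℝ) : ℝ := (2 * x - 3) * (y - x) * (y + x - 1) - 2 * x + 4

def exceptionalNum (x y : ℝ) : ℝ := (x - 2) * (y - x) * (x - 1) + x - 1

def exceptionalDen (x y : ℝ) : ℝ := (2 * x - 3) * (y - x) * (x - 1) + 2 * x - y

-- `D · ((t - 1)η - 2δ)` when `α = N / D`, `x = s`, `y = t`.
def etaDeltaNumer (x y N D : ℝ) : ℝ :=
  (y - 1) * ((2 - x) * D + (2 * x - 3) * N) + 2 * (2 * x - 1) * N - 2 * x * D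

-- `D · (3δ - 2)` when `α = N / D`, `x = s`.
def deltaNumer (x N D : ℝ) : ℝ := (3 * x - 2) * D - 3 * (2 * x - 1) * N

lemma ERalpha_of_regular {s t : ℕ} (h : IsRegularPair s t) :
    ERalpha s t = regularNum s t / regularDen s t := by
  rw [ERalpha, if_pos h, regularNum, regularDen]

lemma ERalpha_of_not_regular {s t : ℕ} (h : ¬IsRegularPair s t) :
    ERalpha s t = exceptionalNum s t / exceptionalDen s t := by
  rw [ERalpha, if_neg h, exceptionalNum, exceptionalDen]

lemma eta_delta_ineqs_of_ERalpha_eq_div {s t : ℕ} {N D : ℝ} (hα : ERalpha s t = N / D)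
    (hD : 0 < D) (hηδ : 0 < etaDeltaNumer s t N D) (hδ : 0 < deltaNumer s N D) :
    ((t : ℝ) - 1) * EReta s t > 2 * ERdelta s t ∧ ERdelta s t > 2 / 3 := by
  have hN : N = ERalpha s t * D := by rw [hα, div_mul_cancel₀ N hD.ne']
  rw [hN] at hηδ hδ
  constructor
  · have : etaDeltaNumer s t (ERalpha s t * D) D =
        D * ((t - 1) * EReta s t - 2 * ERdelta s t) := by
      rw [etaDeltaNumer, EReta, ERdelta]; ring
    rw [this] at hηδ
    linarith [pos_of_mul_pos_right hηδ hD.le]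
  · have : deltaNumer s (ERalpha s t * D) D = D * (3 * ERdelta s t - 2) := by
      rw [deltaNumer, ERdelta]; ring
    rw [this] at hδ
    linarith [pos_of_mul_pos_right hδ hD.le]

lemma regular_polys_pos {a b : ℝ} (ha : 0 ≤ a) (hb : 0 ≤ b) :
    let x := a + b + 7; let y := 2 * a + b + 10
    0 < regularDen x y ∧ 0 < etaDeltaNumer x y (regularNum x y) (regularDen x y) ∧
      0 < deltaNumer x (regularNum x y) (regularDen x y) := by
  simp only [regularDen, regularNum, etaDeltaNumer, deltaNumer]
  refine ⟨?_, ?_, ?_⟩ <;> ring_nf <;> positivity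

lemma exceptional_polys_pos {a b : ℝ} (ha : 0 ≤ a) (hb : 0 ≤ b) :
    let x := a + b + 3; let y := 2 * a + b + 5
    0 < exceptionalDen x y ∧ 0 < etaDeltaNumer x y (exceptionalNum x y) (exceptionalDen x y) ∧
      0 < deltaNumer x (exceptionalNum x y) (exceptionalDen x y) := by
  simp only [exceptionalDen, exceptionalNum, etaDeltaNumer, deltaNumer]
  refine ⟨?_, ?_, ?_⟩ <;> ring_nf <;> positivity

lemma exists_regular_coords {s t : ℕ} (h : IsRegularPair s t) :
    ∃ a b : ℝ, 0 ≤ a ∧ 0 ≤ b ∧ (s : ℝ) = a + b + 7 ∧ (t : ℝ) = 2 * a + b + 10 := by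
  have hst : s + 3 ≤ t ∧ t + 4 ≤ 2 * s := by
    rcases h with ⟨-, h1, h2⟩ | ⟨rfl, rfl⟩ | ⟨rfl, rfl⟩ <;> omega
  have h1 : (s : ℝ) + 3 ≤ t := by exact_mod_cast hst.1
  have h2 : (t : ℝ) + 4 ≤ 2 * s := by exact_mod_cast hst.2
  exact ⟨t - s - 3, 2 * s - 4 - t, by linarith, by linarith, by ring, by ring⟩

lemma exists_exceptional_coords {s t : ℕ} (ht1 : s + 2 ≤ t) (ht2 : t ≤ 2 * s - 1) :
    ∃ a b : ℝ, 0 ≤ a ∧ 0 ≤ b ∧ (s : ℝ) = a + b + 3 ∧ (t : ℝ) = 2 * a + b + 5 := by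
  have h1 : (s : ℝ) + 2 ≤ t := by exact_mod_cast ht1
  have h2 : (t : ℝ) + 1 ≤ 2 * s := by exact_mod_cast (by omega : t + 1 ≤ 2 * s)
  exact ⟨t - s - 2, 2 * s - 1 - t, by linarith, by linarith, by ring, by ring⟩

theorem eta_delta_ineqs_general (s t : ℕ) (ht1 : s + 2 ≤ t) (ht2 : t ≤ 2 * s - 1) :
    ((t : ℝ) - 1) * EReta s t > 2 * ERdelta s t ∧ ERdelta s t > 2 / 3 := by
  by_cases h : IsRegularPair s t
  · obtain ⟨a, b, ha, hb, hs, ht⟩ := exists_regular_coords h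
    obtain ⟨hD, hηδ, hδ⟩ := regular_polys_pos ha hb
    rw [← hs, ← ht] at hD hηδ hδ
    exact eta_delta_ineqs_of_ERalpha_eq_div (ERalpha_of_regular h) hD hηδ hδ
  · obtain ⟨a, b, ha, hb, hs, ht⟩ := exists_exceptional_coords ht1 ht2
    obtain ⟨hD, hηδ, hδ⟩ := exceptional_polys_pos ha hb
    rw [← hs, ← ht] at hD hηδ hδ
    exact eta_delta_ineqs_of_ERalpha_eq_div (ERalpha_of_not_regular h) hD hηδ hδ

/-- **Lemma (app2(d),(e)).** `(t-1)η > 2δ` and `δ > 2/3`. -/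
theorem eta_delta_ineqs (s t : ℕ) (hs : 3 ≤ s) (ht1 : s + 2 ≤ t) (ht2 : t ≤ 2 * s - 1) :
    ((t : ℝ) - 1) * EReta s t > 2 * ERdelta s t ∧ ERdelta s t > 2 / 3 :=
  eta_delta_ineqs_general s t ht1 ht2
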